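/- arXiv:1710.06672 — 3 statements merged into one kernel-verified Lean document; each statement's English description precedes it below -/
import Mathlib

section
/- (Sharp estimate on the saddle intervals.) Assume q ≥ 1. For every x ∈ ℱ, π_ε(x) = ( G₀(x) + √ε·G₁(x) + o(√ε) )·e^{−V̂(x)/ε}, i.e. lim_{ε→0} ε^{−1/2}( e^{V̂(x)/ε}·π_ε(x) − G₀(x) − √ε·G₁(x) ) = 0; and for every x ∈ 𝒢, π_ε(x) = (1+o(1))·ε·G₂(x)·e^{−V̂(x)/ε}, i.e. lim_{ε→0} e^{V̂(x)/ε}·π_ε(x)/(ε·G₂(x)) = 1. -/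
/-!
On a saddle interval the drift `b` is nonnegative: right after the last zero of `b` before a
point where `b < 0`, the potential `S` would rise, which is impossible right after the left end
(a maximum of `S` over its future) and right after a zero component `[c⁻, c⁺]` (where
`b'(c⁺+) > 0`). Hence every point of the interval is a maximum of `S` over its future.

At a point `x` of a zero component the integrand of `π_ε` equals `1` on `[x, c⁺]`, which gives
`G₀ = c⁺ - x`; past `c⁺` the exponent behaves like `-b'(c⁺+) (y - c⁺)² / 2`, and Laplace's method
gives the term `√ε · √(π / (2 b'(c⁺+)))`. At a point where `b > 0` the exponent decays like
`-b(x) (y - x)` and Laplace's method gives `ε / b(x)`. Laplace's method is run by squeezing the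
exponent near the maximum between models of slope `a ± η` and letting `η → 0`; the rest of
`[x, x + 1]` contributes an exponentially small amount.
-/

open Filter Set Real MeasureTheory Topology

theorem tendsto_of_forall_eventually_squeeze {ι κ α : Type*} [TopologicalSpace α] [LinearOrder α]
    [OrderTopology α] {l : Filter ι} {k : Filter κ} [k.NeBot] {f : ι → α} {A B : κ → α} {L : α}
    (hA : Tendsto A k (𝓝 L)) (hB : Tendsto B k (𝓝 L))
    (h : ∀ᶠ η in k, ∃ g h : ι → α, Tendsto g l (𝓝 (A η)) ∧ Tendsto h l (𝓝 (B η)) ∧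
      ∀ᶠ i in l, g i ≤ f i ∧ f i ≤ h i) :
    Tendsto f l (𝓝 L) := by
  rw [tendsto_order]
  refine ⟨fun r hr => ?_, fun r hr => ?_⟩
  · obtain ⟨η, hη, g, _, hg, _, hgf⟩ := ((hA.eventually (lt_mem_nhds hr)).and h).exists
    filter_upwards [hg.eventually (lt_mem_nhds hη), hgf] with i h₁ h₂ using h₁.trans_le h₂.1
  · obtain ⟨η, hη, _, g, _, hg, hfg⟩ := ((hB.eventually (gt_mem_nhds hr)).and h).exists
    filter_upwards [hg.eventually (gt_mem_nhds hη), hfg] with i h₁ h₂ using h₂.2.trans_lt h₁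

theorem eventually_forall_Icc_of_nhdsGE {p : ℝ → Prop} {P : ℝ} (h : ∀ᶠ t in 𝓝[≥] P, p t) :
    ∀ᶠ δ in 𝓝[>] 0, ∀ t ∈ Icc P (P + δ), p t := by
  obtain ⟨u, hu, hsub⟩ := mem_nhdsGE_iff_exists_Ico_subset.1 h
  filter_upwards [Ioo_mem_nhdsGT (sub_pos.2 hu)] with δ hδ t ht
  exact hsub ⟨ht.1, by linarith [ht.2, hδ.2]⟩

theorem HasDerivWithinAt.eventually_abs_sub_le {b : ℝ → ℝ} {a P η : ℝ}
    (hd : HasDerivWithinAt b a (Ici P) P) (hη : 0 < η) :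
    ∀ᶠ t in 𝓝[≥] P, |b t - b P - a * (t - P)| ≤ η * (t - P) := by
  filter_upwards [(hasDerivWithinAt_iff_isLittleO.1 hd).bound hη, self_mem_nhdsWithin]
    with t ht (htP : P ≤ t)
  simpa [mul_comm a, abs_of_nonneg (sub_nonneg.2 htP)] using ht

theorem HasDerivWithinAt.eventually_nhdsGT_lt {b : ℝ → ℝ} {a P : ℝ}
    (hd : HasDerivWithinAt b a (Ici P) P) (ha : 0 < a) : ∀ᶠ t in 𝓝[>] P, b P < b t := by
  filter_upwards [nhdsWithin_mono P Ioi_subset_Ici_self (hd.eventually_abs_sub_le (half_pos ha)),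
    self_mem_nhdsWithin] with t ht (hPt : P < t)
  nlinarith [abs_le.1 ht, sub_pos.2 hPt]

theorem exists_pos_forall_le_neg {φ : ℝ → ℝ} {u v : ℝ} (hφ : ContinuousOn φ (Icc u v))
    (hneg : ∀ y ∈ Icc u v, φ y < 0) : ∃ c > 0, ∀ y ∈ Icc u v, φ y ≤ -c := by
  rcases (Icc u v).eq_empty_or_nonempty with he | hne
  · exact ⟨1, one_pos, by simp [he]⟩
  · obtain ⟨y₀, hy₀, hmax⟩ := isCompact_Icc.exists_isMaxOn hne hφ
    exact ⟨-φ y₀, neg_pos.2 (hneg y₀ hy₀), fun y hy => by simpa using hmax hy⟩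

theorem tendsto_exp_neg_div_div_rpow {c : ℝ} (hc : 0 < c) (s : ℝ) :
    Tendsto (fun ε => exp (-c / ε) / ε ^ s) (𝓝[>] 0) (𝓝 0) := by
  refine ((tendsto_rpow_mul_exp_neg_mul_atTop_nhds_zero s c hc).comp
    tendsto_inv_nhdsGT_zero).congr' ?_
  filter_upwards [self_mem_nhdsWithin] with ε (hε : 0 < ε)
  simp [inv_rpow hε.le, div_eq_mul_inv, mul_comm]

theorem sub_le_sub_of_hasDerivAt_le {f g f' g' : ℝ → ℝ} {a b : ℝ} (hab : a ≤ b)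
    (hf : ∀ x, HasDerivAt f (f' x) x) (hg : ∀ x, HasDerivAt g (g' x) x)
    (h : ∀ x ∈ Ioo a b, f' x ≤ g' x) : f b - f a ≤ g b - g a := by
  have hmono : MonotoneOn (fun x => g x - f x) (Icc a b) := by
    refine monotoneOn_of_hasDerivWithinAt_nonneg (convex_Icc a b) ?_
      (fun x _ => ((hg x).sub (hf x)).hasDerivWithinAt) ?_
    · exact fun x _ => ((hg x).continuousAt.sub (hf x).continuousAt).continuousWithinAt
    · intro x hx
      rw [interior_Icc] at hx
      exact sub_nonneg.2 (h x hx)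
  have := hmono ⟨le_rfl, hab⟩ ⟨hab, le_rfl⟩ hab
  simp only at this
  linarith

theorem lt_of_hasDerivAt_pos {f f' : ℝ → ℝ} {a b : ℝ} (hab : a < b)
    (hf : ∀ x, HasDerivAt f (f' x) x) (h : ∀ x ∈ Ioo a b, 0 < f' x) : f a < f b := by
  refine strictMonoOn_of_hasDerivWithinAt_pos (convex_Icc a b)
    (fun x _ => (hf x).continuousAt.continuousWithinAt) (fun x _ => (hf x).hasDerivWithinAt) ?_
    ⟨le_rfl, hab.le⟩ ⟨hab.le, le_rfl⟩ hab
  rwa [interior_Icc]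

theorem tendsto_integral_comp_sub_div_div {ι : Type*} {l : Filter ι} [l.IsCountablyGenerated]
    {F : ℝ → ℝ} (hF : IntegrableOn F (Ioi 0)) {w : ι → ℝ} (hw : Tendsto w l (𝓝[>] 0)) (P : ℝ)
    {δ : ℝ} (hδ : 0 < δ) :
    Tendsto (fun i => (∫ y in P..P + δ, F ((y - P) / w i)) / w i) l (𝓝 (∫ v in Ioi 0, F v)) := by
  refine (intervalIntegral_tendsto_integral_Ioi 0 hF
    ((tendsto_inv_nhdsGT_zero.comp hw).const_mul_atTop hδ)).congr' ?_
  filter_upwards [hw self_mem_nhdsWithin] with i (hi : 0 < w i)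
  rw [intervalIntegral.integral_comp_sub_right (fun y => F (y / w i)),
    intervalIntegral.integral_comp_div F hi.ne']
  simp [hi.ne', div_eq_mul_inv, mul_comm]

theorem integral_exp_div_sandwich {φ g h : ℝ → ℝ} {P δ X c ε : ℝ} (hφ : Continuous φ)
    (hg : Continuous g) (hh : Continuous h) (hδ : 0 ≤ δ) (hδX : P + δ ≤ X) (hε : 0 < ε)
    (hgφ : ∀ y ∈ Icc P (P + δ), g y ≤ φ y) (hφh : ∀ y ∈ Icc P (P + δ), φ y ≤ h y)
    (htail : ∀ y ∈ Icc (P + δ) X, φ y ≤ -c) :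
    ∫ y in P..P + δ, exp (g y / ε) ≤ ∫ y in P..X, exp (φ y / ε) ∧
      ∫ y in P..X, exp (φ y / ε) ≤
        (∫ y in P..P + δ, exp (h y / ε)) + (X - (P + δ)) * exp (-c / ε) := by
  have hint : ∀ ψ : ℝ → ℝ, Continuous ψ → ∀ u v : ℝ,
      IntervalIntegrable (fun y => exp (ψ y / ε)) volume u v :=
    fun ψ hψ u v => (by fun_prop : Continuous fun y => exp (ψ y / ε)).intervalIntegrable u v
  have hexp : ∀ {u v : ℝ}, u ≤ v → exp (u / ε) ≤ exp (v / ε) :=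
    fun huv => exp_le_exp.2 (div_le_div_of_nonneg_right huv hε.le)
  have hPδ : P ≤ P + δ := by linarith
  have hsplit :=
    intervalIntegral.integral_add_adjacent_intervals (hint φ hφ P (P + δ)) (hint φ hφ _ X)
  constructor
  · have hloc := intervalIntegral.integral_mono_on hPδ (hint g hg _ _) (hint φ hφ _ _)
      fun y hy => hexp (hgφ y hy)
    have hrest : 0 ≤ ∫ y in P + δ..X, exp (φ y / ε) :=
      intervalIntegral.integral_nonneg hδX fun y _ => (exp_pos _).le
    linarith
  · have hloc := intervalIntegral.integral_mono_on hPδ (hint φ hφ _ _) (hint h hh _ _)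
      fun y hy => hexp (hφh y hy)
    have hrest := intervalIntegral.integral_mono_on hδX (hint φ hφ _ _)
      intervalIntegrable_const fun y hy => hexp (htail y hy)
    rw [intervalIntegral.integral_const, smul_eq_mul] at hrest
    linarith

theorem tendsto_laplace_of_squeeze {φ : ℝ → ℝ} (hφ : Continuous φ) {P X : ℝ} (hPX : P < X)
    (hneg : ∀ y ∈ Ioc P X, φ y < 0) {w : ℝ → ℝ} (hw : ∀ ε > 0, 0 < w ε)
    (htail : ∀ c > 0, Tendsto (fun ε => exp (-c / ε) / w ε) (𝓝[>] 0) (𝓝 0))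
    {g h : ℝ → ℝ → ℝ} (hg : ∀ η, Continuous (g η)) (hh : ∀ η, Continuous (h η))
    {A B : ℝ → ℝ} {L : ℝ} (hA : Tendsto A (𝓝[>] 0) (𝓝 L)) (hB : Tendsto B (𝓝[>] 0) (𝓝 L))
    (hloc : ∀ᶠ η in 𝓝[>] 0, ∀ᶠ δ in 𝓝[>] 0,
      (∀ y ∈ Icc P (P + δ), g η y ≤ φ y ∧ φ y ≤ h η y) ∧
      Tendsto (fun ε => (∫ y in P..P + δ, exp (g η y / ε)) / w ε) (𝓝[>] 0) (𝓝 (A η)) ∧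
      Tendsto (fun ε => (∫ y in P..P + δ, exp (h η y / ε)) / w ε) (𝓝[>] 0) (𝓝 (B η))) :
    Tendsto (fun ε => (∫ y in P..X, exp (φ y / ε)) / w ε) (𝓝[>] 0) (𝓝 L) := by
  refine tendsto_of_forall_eventually_squeeze hA hB ?_
  filter_upwards [hloc] with η hη
  obtain ⟨δ, ⟨hδ, hδX⟩, hbounds, hgA, hhB⟩ :=
    (Filter.Eventually.and (Ioo_mem_nhdsGT (sub_pos.2 hPX)) hη).exists
  obtain ⟨c, hc, hφc⟩ := exists_pos_forall_le_neg (u := P + δ) hφ.continuousOn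
    fun y hy => hneg y ⟨by linarith [hy.1], hy.2⟩
  have hupper := hhB.add ((htail c hc).const_mul (X - (P + δ)))
  rw [mul_zero, add_zero] at hupper
  refine ⟨_, _, hgA, hupper, ?_⟩
  filter_upwards [self_mem_nhdsWithin] with ε (hε : 0 < ε)
  obtain ⟨hlo, hhi⟩ := integral_exp_div_sandwich hφ (hg η) (hh η) hδ.le (by linarith) hε
    (fun y hy => (hbounds y hy).1) (fun y hy => (hbounds y hy).2) hφc
  refine ⟨div_le_div_of_nonneg_right hlo (hw ε hε).le, ?_⟩
  calc (∫ y in P..X, exp (φ y / ε)) / w ε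
      ≤ ((∫ y in P..P + δ, exp (h η y / ε)) + (X - (P + δ)) * exp (-c / ε)) / w ε :=
        div_le_div_of_nonneg_right hhi (hw ε hε).le
    _ = _ := by rw [add_div, mul_div_assoc]

theorem tendsto_sqrt_nhdsGT_zero : Tendsto sqrt (𝓝[>] 0) (𝓝[>] 0) :=
  tendsto_nhdsWithin_iff.2 ⟨(continuous_sqrt.tendsto' 0 0 sqrt_zero).mono_left nhdsWithin_le_nhds,
    eventually_mem_nhdsWithin.mono fun _ hε => sqrt_pos.2 hε⟩

theorem tendsto_integral_exp_neg_mul_sq_div_sqrt {K δ : ℝ} (hK : 0 < K) (hδ : 0 < δ) (P : ℝ) :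
    Tendsto (fun ε => (∫ y in P..P + δ, exp (-(K / 2) * (y - P) ^ 2 / ε)) / √ε) (𝓝[>] 0)
      (𝓝 √(π / (2 * K))) := by
  have hlim := tendsto_integral_comp_sub_div_div
    (integrable_exp_neg_mul_sq (half_pos hK)).integrableOn tendsto_sqrt_nhdsGT_zero P hδ
  have hval : √(π / (K / 2)) / 2 = √(π / (2 * K)) := by
    rw [show π / (K / 2) = 2 ^ 2 * (π / (2 * K)) by field_simp, sqrt_mul' _ (by positivity),
      sqrt_sq zero_le_two]
    ring
  rw [integral_gaussian_Ioi, hval] at hlim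
  refine hlim.congr' ?_
  filter_upwards [self_mem_nhdsWithin] with ε (hε : 0 < ε)
  congr 1
  refine intervalIntegral.integral_congr fun y _ => ?_
  simp only [div_pow, sq_sqrt hε.le, mul_div_assoc]

theorem tendsto_integral_exp_neg_mul_div_self {K δ : ℝ} (hK : 0 < K) (hδ : 0 < δ) (P : ℝ) :
    Tendsto (fun ε => (∫ y in P..P + δ, exp (-K * (y - P) / ε)) / ε) (𝓝[>] 0) (𝓝 K⁻¹) := by
  have hlim := tendsto_integral_comp_sub_div_div (exp_neg_integrableOn_Ioi 0 hK)
    tendsto_id P hδ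
  rw [integral_exp_mul_Ioi (neg_neg_of_pos hK), mul_zero, exp_zero, neg_div_neg_eq, one_div]
    at hlim
  refine hlim.congr fun ε => ?_
  simp only [id, mul_div_assoc]

theorem tendsto_laplace_quadratic {b S : ℝ → ℝ} {P X a : ℝ} (hS : ∀ y, HasDerivAt S (-b y) y)
    (hPX : P < X) (hlt : ∀ y ∈ Ioc P X, S y < S P) (hbP : b P = 0)
    (hd : HasDerivWithinAt b a (Ici P) P) (ha : 0 < a) :
    Tendsto (fun ε => (∫ y in P..X, exp ((S y - S P) / ε)) / √ε) (𝓝[>] 0)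
      (𝓝 √(π / (2 * a))) := by
  have hΛ : ∀ σ : ℝ, Tendsto (fun η => √(π / (2 * (a + σ * η)))) (𝓝[>] 0) (𝓝 √(π / (2 * a))) := by
    intro σ
    have : ContinuousAt (fun η => √(π / (2 * (a + σ * η)))) 0 :=
      continuous_sqrt.continuousAt.comp (continuousAt_const.div (by fun_prop) (by simp [ha.ne']))
    simpa using this.tendsto.mono_left nhdsWithin_le_nhds
  have hmodel : ∀ K y, HasDerivAt (fun y => -(K / 2) * (y - P) ^ 2) (-(K * (y - P))) y := by
    intro K y
    refine ((((hasDerivAt_id' y).sub_const P).pow 2).const_mul (-(K / 2))).congr_deriv ?_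
    ring
  have hSc : Continuous S := continuous_iff_continuousAt.2 fun y => (hS y).continuousAt
  refine tendsto_laplace_of_squeeze (φ := fun y => S y - S P) (w := sqrt)
    (g := fun η y => -((a + η) / 2) * (y - P) ^ 2) (h := fun η y => -((a - η) / 2) * (y - P) ^ 2)
    (hSc.sub continuous_const) hPX (fun y hy => sub_neg.2 (hlt y hy)) (fun ε hε => sqrt_pos.2 hε)
    (fun c hc => by simpa [sqrt_eq_rpow] using tendsto_exp_neg_div_div_rpow hc (1 / 2))
    (fun η => by fun_prop) (fun η => by fun_prop) (by simpa using hΛ 1) (by simpa using hΛ (-1)) ?_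
  filter_upwards [Ioo_mem_nhdsGT ha] with η hη
  filter_upwards [eventually_forall_Icc_of_nhdsGE (hd.eventually_abs_sub_le hη.1),
    self_mem_nhdsWithin] with δ hbd (hδ : 0 < δ)
  refine ⟨fun y hy => ⟨?_, ?_⟩, tendsto_integral_exp_neg_mul_sq_div_sqrt (by linarith [hη.1]) hδ P,
    tendsto_integral_exp_neg_mul_sq_div_sqrt (by linarith [hη.2]) hδ P⟩
  all_goals
    have hbt : ∀ t ∈ Ioo P y, |b t - a * (t - P)| ≤ η * (t - P) := fun t ht => by
      simpa [hbP] using hbd t ⟨ht.1.le, ht.2.le.trans hy.2⟩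
  · have := sub_le_sub_of_hasDerivAt_le hy.1 (hmodel (a + η)) hS fun t ht => by
      linarith [abs_le.1 (hbt t ht)]
    simpa using this
  · have := sub_le_sub_of_hasDerivAt_le hy.1 hS (hmodel (a - η)) fun t ht => by
      linarith [abs_le.1 (hbt t ht)]
    simpa using this

theorem tendsto_laplace_linear {b S : ℝ → ℝ} {x X : ℝ} (hS : ∀ y, HasDerivAt S (-b y) y)
    (hxX : x < X) (hlt : ∀ y ∈ Ioc x X, S y < S x) (hbc : ContinuousWithinAt b (Ici x) x)
    (hbx : 0 < b x) :
    Tendsto (fun ε => (∫ y in x..X, exp ((S y - S x) / ε)) / ε) (𝓝[>] 0) (𝓝 (b x)⁻¹) := by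
  have hΛ : ∀ σ : ℝ, Tendsto (fun η => (b x + σ * η)⁻¹) (𝓝[>] 0) (𝓝 (b x)⁻¹) := by
    intro σ
    have : ContinuousAt (fun η => (b x + σ * η)⁻¹) 0 :=
      (continuousAt_const.add (continuousAt_const.mul continuousAt_id)).inv₀ (by simp [hbx.ne'])
    simpa using this.tendsto.mono_left nhdsWithin_le_nhds
  have hmodel : ∀ K y, HasDerivAt (fun y => -K * (y - x)) (-K) y := fun K y => by
    simpa using ((hasDerivAt_id' y).sub_const x).const_mul (-K)
  have hSc : Continuous S := continuous_iff_continuousAt.2 fun y => (hS y).continuousAt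
  refine tendsto_laplace_of_squeeze (φ := fun y => S y - S x) (w := id)
    (g := fun η y => -(b x + η) * (y - x)) (h := fun η y => -(b x - η) * (y - x))
    (hSc.sub continuous_const) hxX (fun y hy => sub_neg.2 (hlt y hy)) (fun ε hε => hε)
    (fun c hc => by simpa using tendsto_exp_neg_div_div_rpow hc 1)
    (fun η => by fun_prop) (fun η => by fun_prop) (by simpa using hΛ 1) (by simpa using hΛ (-1)) ?_
  filter_upwards [Ioo_mem_nhdsGT hbx] with η hη
  have hnear : ∀ᶠ t in 𝓝[≥] x, |b t - b x| ≤ η := by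
    filter_upwards [hbc.eventually (Metric.closedBall_mem_nhds (b x) hη.1)] with t ht
    exact ht
  filter_upwards [eventually_forall_Icc_of_nhdsGE hnear, self_mem_nhdsWithin]
    with δ hbd (hδ : 0 < δ)
  refine ⟨fun y hy => ⟨?_, ?_⟩, tendsto_integral_exp_neg_mul_div_self (by linarith [hη.1]) hδ x,
    tendsto_integral_exp_neg_mul_div_self (by linarith [hη.2]) hδ x⟩
  all_goals
    have hbt : ∀ t ∈ Ioo x y, |b t - b x| ≤ η := fun t ht => hbd t ⟨ht.1.le, ht.2.le.trans hy.2⟩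
  · have := sub_le_sub_of_hasDerivAt_le hy.1 (hmodel (b x + η)) hS fun t ht => by
      linarith [abs_le.1 (hbt t ht)]
    simpa using this
  · have := sub_le_sub_of_hasDerivAt_le hy.1 hS (hmodel (b x - η)) fun t ht => by
      linarith [abs_le.1 (hbt t ht)]
    simpa using this

theorem exists_Ico_forall_Ioc_neg {b : ℝ → ℝ} {L u : ℝ} (hb : ContinuousOn b (Icc L u))
    (hLu : L < u) (hu : b u < 0) :
    ∃ w ∈ Ico L u, (w = L ∨ b w = 0) ∧ ∀ t ∈ Ioc w u, b t < 0 := by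
  set Z := insert L (Icc L u ∩ b ⁻¹' {0})
  have hZc : IsClosed Z := by
    simp only [Z, insert_eq]
    exact isClosed_singleton.union
      (hb.preimage_isClosed_of_isClosed isClosed_Icc isClosed_singleton)
  have hZu : ∀ t ∈ Z, t ≤ u := by
    rintro t (rfl | ht)
    exacts [hLu.le, ht.1.2]
  have hZbdd : BddAbove Z := ⟨u, hZu⟩
  have hwZ : sSup Z ∈ Z := hZc.csSup_mem ⟨L, mem_insert L _⟩ hZbdd
  have hLw : L ≤ sSup Z := le_csSup hZbdd (mem_insert L _)
  have hwu : sSup Z ≠ u := by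
    intro h
    rcases h ▸ hwZ with h | h
    exacts [hLu.ne' h, hu.ne h.2]
  refine ⟨sSup Z, ⟨hLw, (hZu _ hwZ).lt_of_ne hwu⟩,
    hwZ.imp id fun h => h.2, fun t ht => not_le.1 fun hbt => ?_⟩
  obtain ⟨r, hr, hbr⟩ := intermediate_value_Icc' ht.2
    (hb.mono (Icc_subset_Icc (hLw.trans ht.1.le) le_rfl)) ⟨hu.le, hbt⟩
  have : r ≤ sSup Z :=
    le_csSup hZbdd (mem_insert_of_mem L ⟨⟨hLw.trans (ht.1.le.trans hr.1), hr.2⟩, hbr⟩)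
  linarith [ht.1, hr.1]

theorem nonneg_of_isMaxOn_of_eventually_nonneg {b S : ℝ → ℝ} {L l : ℝ} (hb : Continuous b)
    (hS : ∀ y, HasDerivAt S (-b y) y) (hmax : IsMaxOn S (Ici L) L)
    (hzero : ∀ w ∈ Ioo L l, b w = 0 → ∀ᶠ t in 𝓝[>] w, 0 ≤ b t) :
    ∀ u ∈ Ioo L l, 0 ≤ b u := by
  intro u hu
  by_contra! hbu
  obtain ⟨w, hw, hwz, hneg⟩ := exists_Ico_forall_Ioc_neg hb.continuousOn hu.1 hbu
  rcases hw.1.eq_or_lt with rfl | hLw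
  · exact (lt_of_hasDerivAt_pos hw.2 hS fun t ht => neg_pos.2 (hneg t ⟨ht.1, ht.2.le⟩)).not_ge
      (hmax hu.1.le)
  · obtain ⟨t, hbt, hbt'⟩ := ((hzero w ⟨hLw, hw.2.trans hu.2⟩ (hwz.resolve_left hLw.ne')).and
      (Ioc_mem_nhdsGT hw.2)).exists
    exact (hneg t hbt').not_ge hbt

theorem isMaxOn_Ici_of_nonneg {b S : ℝ → ℝ} {L l : ℝ} (hS : ∀ y, HasDerivAt S (-b y) y)
    (hnn : ∀ u ∈ Ioo L l, 0 ≤ b u) (hmax : IsMaxOn S (Ici l) l) :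
    ∀ u ∈ Icc L l, IsMaxOn S (Ici u) u := by
  have hanti : AntitoneOn S (Icc L l) := by
    refine antitoneOn_of_hasDerivWithinAt_nonpos (convex_Icc L l)
      (fun x _ => (hS x).continuousAt.continuousWithinAt) (fun x _ => (hS x).hasDerivWithinAt) ?_
    rw [interior_Icc]
    exact fun x hx => neg_nonpos.2 (hnn x hx)
  intro u hu y (hy : u ≤ y)
  rcases le_total y l with hyl | hly
  · exact hanti hu ⟨hu.1.trans hy, hyl⟩ hy
  · exact (hmax hly).trans (hanti hu ⟨hu.1.trans hu.2, le_rfl⟩ hu.2)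

/-- The paper's `z x` is the point `P` with `IsFarthestMax S x P`. -/
def IsFarthestMax (S : ℝ → ℝ) (x P : ℝ) : Prop :=
  x ≤ P ∧ (∀ y, x ≤ y → S y ≤ S P) ∧ ∀ y, x ≤ y → S y = S P → y ≤ P

theorem IsFarthestMax.unique {S : ℝ → ℝ} {x P Q : ℝ} (hP : IsFarthestMax S x P)
    (hQ : IsFarthestMax S x Q) : P = Q := by
  have hSPQ : S P = S Q := le_antisymm (hQ.2.1 P hP.1) (hP.2.1 Q hQ.1)
  exact le_antisymm (hQ.2.2 P hP.1 hSPQ) (hP.2.2 Q hQ.1 hSPQ.symm)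

theorem isFarthestMax_of_forall_lt {S : ℝ → ℝ} {x P : ℝ} (hxP : x ≤ P)
    (hmax : IsMaxOn S (Ici x) P) (hlt : ∀ y, P < y → S y < S P) : IsFarthestMax S x P :=
  ⟨hxP, fun _ hy => hmax hy, fun y _ hy => not_lt.1 fun hPy => (hlt y hPy).ne hy⟩

theorem Function.Periodic.lt_add_of_eqOn_zero {b : ℝ → ℝ} {T x P : ℝ}
    (hper : Function.Periodic b T) (hT : 0 ≤ T) (hB : ∫ θ in (0 : ℝ)..T, b θ ≠ 0)
    (hzero : EqOn b 0 (Icc x P)) : P < x + T := by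
  by_contra! hPT
  refine hB ?_
  rw [← zero_add T, ← hper.intervalIntegral_add_eq x 0]
  rw [intervalIntegral.integral_congr (g := 0) (hzero.mono ?_)]
  · simp
  · rw [uIcc_of_le (by linarith)]
    exact Icc_subset_Icc le_rfl hPT

theorem sum_ite_mem_Icc_eq {s : ℕ} {cm cp f : ℕ → ℝ} (hle : ∀ j < s, cm j ≤ cp j)
    (hord : ∀ j, j + 1 < s → cp j < cm (j + 1)) {j : ℕ} (hj : j < s) {x : ℝ}
    (hx : x ∈ Icc (cm j) (cp j)) :
    ∑ k ∈ Finset.range s, (if cm k ≤ x ∧ x ≤ cp k then f k else 0) = f j := by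
  have hchain : ∀ i k, i < k → k < s → cp i < cm k := by
    intro i k hik hks
    induction k, hik using Nat.le_induction with
    | base => exact hord i hks
    | succ k hik ih => exact (ih (by omega)).trans_le (hle k (by omega)) |>.trans (hord k hks)
  rw [Finset.sum_eq_single_of_mem j (Finset.mem_range.2 hj),
    if_pos (show cm j ≤ x ∧ x ≤ cp j from hx)]
  intro k hk hkj
  rw [if_neg]
  rintro ⟨h₁, h₂⟩
  rcases lt_or_gt_of_ne hkj with hkj | hkj
  · linarith [hchain k j hkj hj, hx.1]
  · linarith [hchain j k hkj (Finset.mem_range.1 hk), hx.2]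

/-- A saddle interval `Σ_n = (L⁺_n, ℓ_n)` of the paper is `Ioo L l`, and the `Icc (cm j) (cp j)`
are the connected components of `{b = 0}` inside it. -/
structure IsSaddleInterval (b S : ℝ → ℝ) (L l : ℝ) (s : ℕ) (cm cp : ℕ → ℝ) : Prop where
  isMaxOn_left : IsMaxOn S (Ici L) L
  isMaxOn_right : IsMaxOn S (Ici l) l
  zeros_eq : {θ | θ ∈ Ioo L l ∧ b θ = 0} = ⋃ j ∈ Finset.range s, Icc (cm j) (cp j)
  derivWithin_pos : ∀ j < s, 0 < derivWithin b (Ici (cp j)) (cp j)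

namespace IsSaddleInterval

variable {b S : ℝ → ℝ} {L l : ℝ} {s : ℕ} {cm cp : ℕ → ℝ}

theorem mem_zeros (h : IsSaddleInterval b S L l s cm cp) {j : ℕ} (hj : j < s) {t : ℝ}
    (ht : t ∈ Icc (cm j) (cp j)) : t ∈ Ioo L l ∧ b t = 0 := by
  have : t ∈ ⋃ j ∈ Finset.range s, Icc (cm j) (cp j) := mem_iUnion₂.2 ⟨j, Finset.mem_range.2 hj, ht⟩
  rwa [← h.zeros_eq] at this

theorem hasDerivWithinAt (h : IsSaddleInterval b S L l s cm cp) {j : ℕ} (hj : j < s) :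
    HasDerivWithinAt b (derivWithin b (Ici (cp j)) (cp j)) (Ici (cp j)) (cp j) :=
  (differentiableWithinAt_of_derivWithin_ne_zero (h.derivWithin_pos j hj).ne').hasDerivWithinAt

theorem eventually_pos (h : IsSaddleInterval b S L l s cm cp) {j : ℕ} (hj : j < s)
    (hcmcp : cm j ≤ cp j) : ∀ᶠ t in 𝓝[>] cp j, 0 < b t := by
  have hb0 := (h.mem_zeros hj ⟨hcmcp, le_rfl⟩).2
  simpa [hb0] using (h.hasDerivWithinAt hj).eventually_nhdsGT_lt (h.derivWithin_pos j hj)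

theorem nonneg (h : IsSaddleInterval b S L l s cm cp) (hb : Continuous b)
    (hS : ∀ y, HasDerivAt S (-b y) y) : ∀ u ∈ Ioo L l, 0 ≤ b u := by
  refine nonneg_of_isMaxOn_of_eventually_nonneg hb hS h.isMaxOn_left fun w hw hbw => ?_
  have hwZ : w ∈ ⋃ j ∈ Finset.range s, Icc (cm j) (cp j) := by
    rw [← h.zeros_eq]
    exact ⟨hw, hbw⟩
  obtain ⟨j, hj, hwj⟩ := mem_iUnion₂.1 hwZ
  rcases hwj.2.lt_or_eq with hwcp | rfl
  · filter_upwards [Ioo_mem_nhdsGT hwcp] with t ht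
    exact (h.mem_zeros (Finset.mem_range.1 hj) ⟨hwj.1.trans ht.1.le, ht.2.le⟩).2.ge
  · exact (h.eventually_pos (Finset.mem_range.1 hj) hwj.1).mono fun t ht => ht.le

theorem isMaxOn (h : IsSaddleInterval b S L l s cm cp) (hb : Continuous b)
    (hS : ∀ y, HasDerivAt S (-b y) y) : ∀ u ∈ Icc L l, IsMaxOn S (Ici u) u :=
  isMaxOn_Ici_of_nonneg hS (h.nonneg hb hS) h.isMaxOn_right

theorem lt_of_eventually_pos (h : IsSaddleInterval b S L l s cm cp) (hb : Continuous b)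
    (hS : ∀ y, HasDerivAt S (-b y) y) {P : ℝ} (hP : P ∈ Ico L l)
    (hpos : ∀ᶠ t in 𝓝[>] P, 0 < b t) : ∀ y, P < y → S y < S P := by
  obtain ⟨v, hPv, hsub⟩ := mem_nhdsGT_iff_exists_Ioc_subset.1 (hpos.and (Ioc_mem_nhdsGT hP.2))
  intro y hy
  have hw : min y v ∈ Ioc P l := ⟨lt_min hy hPv, (min_le_right y v).trans (hsub ⟨hPv, le_rfl⟩).2.2⟩
  have hdrop : S (min y v) < S P := by
    have := lt_of_hasDerivAt_pos (f := fun y => -S y) hw.1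
      (fun t => (hS t).neg.congr_deriv (neg_neg _))
      fun t ht => (hsub ⟨ht.1, ht.2.le.trans (min_le_right y v)⟩).1
    exact neg_lt_neg_iff.1 this
  exact (h.isMaxOn hb hS _ ⟨hP.1.trans hw.1.le, hw.2⟩ (min_le_left y v)).trans_lt hdrop

theorem tendsto_of_mem_zeros (h : IsSaddleInterval b S L l s cm cp) (hb : Continuous b)
    (hper : Function.Periodic b 1) (hB : 0 < ∫ θ in (0 : ℝ)..1, b θ)
    (hS : ∀ y, HasDerivAt S (-b y) y) {j : ℕ} (hj : j < s) {x : ℝ} (hx : x ∈ Icc (cm j) (cp j)) :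
    IsFarthestMax S x (cp j) ∧
      Tendsto (fun ε => (exp ((S x - S (cp j)) / ε) * (∫ y in x..x + 1, exp ((S y - S x) / ε))
        - (cp j - x) - √ε * √(π / (2 * derivWithin b (Ici (cp j)) (cp j)))) / √ε)
        (𝓝[>] 0) (𝓝 0) := by
  set P := cp j
  have hSc : Continuous S := continuous_iff_continuousAt.2 fun y => (hS y).continuousAt
  have hzero : EqOn b 0 (Icc x P) := fun t ht => (h.mem_zeros hj ⟨hx.1.trans ht.1, ht.2⟩).2
  have hconst : ∀ y ∈ Icc x P, S y = S x :=
    constant_of_has_deriv_right_zero hSc.continuousOn fun t ht => by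
      simpa [hzero ⟨ht.1, ht.2.le⟩] using (hS t).hasDerivWithinAt
  have hSP : S P = S x := hconst P ⟨hx.2, le_rfl⟩
  obtain ⟨hPIoo, hbP⟩ := h.mem_zeros hj ⟨hx.1.trans hx.2, le_rfl⟩
  have hxIoo := (h.mem_zeros hj hx).1
  have hlt : ∀ y, P < y → S y < S P :=
    h.lt_of_eventually_pos hb hS ⟨hPIoo.1.le, hPIoo.2⟩ (h.eventually_pos hj (hx.1.trans hx.2))
  refine ⟨isFarthestMax_of_forall_lt hx.2
    (fun y hy => hSP ▸ h.isMaxOn hb hS x ⟨hxIoo.1.le, hxIoo.2.le⟩ hy) hlt, ?_⟩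
  have hlim := (tendsto_laplace_quadratic hS (hper.lt_add_of_eqOn_zero zero_le_one hB.ne' hzero)
    (fun y hy => hlt y hy.1) hbP (h.hasDerivWithinAt hj) (h.derivWithin_pos j hj)).sub_const
    √(π / (2 * derivWithin b (Ici P) P))
  rw [sub_self] at hlim
  refine hlim.congr' ?_
  filter_upwards [self_mem_nhdsWithin] with ε (hε : 0 < ε)
  have hint : ∀ u v : ℝ, IntervalIntegrable (fun y => exp ((S y - S x) / ε)) volume u v :=
    fun u v => (by fun_prop : Continuous fun y => exp ((S y - S x) / ε)).intervalIntegrable u v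
  have hflat : ∫ y in x..P, exp ((S y - S x) / ε) = P - x := by
    rw [intervalIntegral.integral_congr (g := fun _ => 1)]
    · simp
    · intro y hy
      rw [uIcc_of_le hx.2] at hy
      simp [hconst y hy]
  rw [hSP, sub_self, zero_div, exp_zero, one_mul,
    ← intervalIntegral.integral_add_adjacent_intervals (hint x P) (hint P (x + 1)), hflat]
  field_simp
  ring

theorem tendsto_of_ne_zero (h : IsSaddleInterval b S L l s cm cp) (hb : Continuous b)
    (hS : ∀ y, HasDerivAt S (-b y) y) {x : ℝ} (hx : x ∈ Ioo L l) (hbx : b x ≠ 0) :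
    IsFarthestMax S x x ∧
      Tendsto (fun ε => (∫ y in x..x + 1, exp ((S y - S x) / ε)) / (ε * (b x)⁻¹)) (𝓝[>] 0)
        (𝓝 1) := by
  have hbpos : 0 < b x := (h.nonneg hb hS x hx).lt_of_ne' hbx
  have hlt := h.lt_of_eventually_pos hb hS ⟨hx.1.le, hx.2⟩
    ((hb.continuousAt.eventually (lt_mem_nhds hbpos)).filter_mono nhdsWithin_le_nhds)
  refine ⟨isFarthestMax_of_forall_lt le_rfl (h.isMaxOn hb hS x ⟨hx.1.le, hx.2.le⟩) hlt, ?_⟩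
  have hlim := (tendsto_laplace_linear hS (lt_add_one x) (fun y hy => hlt y hy.1)
    hb.continuousWithinAt hbpos).mul_const (b x)
  rw [inv_mul_cancel₀ hbx] at hlim
  refine hlim.congr fun ε => ?_
  rw [div_mul_eq_div_div, div_inv_eq_mul]

end IsSaddleInterval

theorem sharp_estimate_on_saddle_intervals_general
    (b : ℝ → ℝ) (hb : Continuous b) (hbper : ∀ x, b (x + 1) = b x)
    (hB : 0 < ∫ θ in (0:ℝ)..1, b θ)
    (S : ℝ → ℝ) (hS : ∀ x, S x = -∫ t in (0:ℝ)..x, b t)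
    -- the farthest maximum to the right and the quasi-potential
    (z : ℝ → ℝ)
    (hz : ∀ x, x ≤ z x ∧ (∀ y, x ≤ y → S y ≤ S (z x)) ∧
        (∀ y, x ≤ y → S y = S (z x) → y ≤ z x))
    -- landscapes `Λ_n = [ℓ_n, L⁺_{n+1}]` and saddle intervals `Σ_n = (L⁺_n, ℓ_n)`
    (m' : ℕ) (ℓ Lp : ℕ → ℝ)
    (hland : ∀ n < m', ℓ n < Lp (n + 1))
    (hLfix : ∀ n ≤ m', z (Lp n) = Lp n)
    (hzland : ∀ n < m', ∀ x ∈ Set.Icc (ℓ n) (Lp (n + 1)), S (z x) = S (ℓ n))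
    -- components of `{b = 0}` inside the saddle intervals; `ℱ`, `𝒢`, `G₀`, `G₁`, `G₂`
    (s : ℕ → ℕ) (cm cp : ℕ → ℕ → ℝ)
    (hcSig : ∀ n < m', ∀ j < s n, Lp n < cm n j ∧ cm n j ≤ cp n j ∧ cp n j < ℓ n)
    (hcord2 : ∀ n < m', ∀ j, j + 1 < s n → cp n j < cm n (j + 1))
    (hcompSig : ∀ n < m', {θ : ℝ | θ ∈ Set.Ioo (Lp n) (ℓ n) ∧ b θ = 0}
        = ⋃ j ∈ Finset.range (s n), Set.Icc (cm n j) (cp n j))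
    (hcpside : ∀ n < m', ∀ j < s n, 0 < derivWithin b (Set.Ici (cp n j)) (cp n j))
    (G₀ G₁ G₂ : ℝ → ℝ)
    (hG₀Sig : ∀ n < m', ∀ x ∈ Set.Ioo (Lp n) (ℓ n), G₀ x = z x - x)
    (hG₁Sig : ∀ n < m', ∀ x ∈ Set.Ioo (Lp n) (ℓ n), G₁ x
        = ∑ j ∈ Finset.range (s n),
            if cm n j ≤ x ∧ x ≤ cp n j
            then Real.sqrt (Real.pi / (2 * |derivWithin b (Set.Ici (cp n j)) (cp n j)|))
            else 0)
    (hG₂Sig : ∀ n < m', ∀ x ∈ Set.Ioo (Lp n) (ℓ n), G₂ x = if b x = 0 then 0 else 1 / b x)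
    (F' G' : Set ℝ)
    (hF' : F' = ⋃ n ∈ Finset.range m', ⋃ j ∈ Finset.range (s n), Set.Icc (cm n j) (cp n j))
    (hG' : G' = (⋃ n ∈ Finset.range m', Set.Ioo (Lp n) (ℓ n)) \ F')
    -- the (unnormalized) stationary density
    (πe : ℝ → ℝ → ℝ)
    (hπ : ∀ ε x, πe ε x = ∫ y in x..(x + 1), Real.exp ((S y - S x) / ε))
    :
    (∀ x ∈ F', Filter.Tendsto
        (fun ε : ℝ => (Real.exp ((S x - S (z x)) / ε) * πe ε x
            - G₀ x - Real.sqrt ε * G₁ x) / Real.sqrt ε)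
        (nhdsWithin (0:ℝ) (Set.Ioi 0)) (nhds 0)) ∧
    (∀ x ∈ G', Filter.Tendsto
        (fun ε : ℝ => Real.exp ((S x - S (z x)) / ε) * πe ε x / (ε * G₂ x))
        (nhdsWithin (0:ℝ) (Set.Ioi 0)) (nhds 1)) := by
  have hSd : ∀ y, HasDerivAt S (-b y) y := fun y => by
    rw [show S = fun x => -∫ t in (0:ℝ)..x, b t from funext hS]
    exact (hb.integral_hasStrictDerivAt 0 y).hasDerivAt.neg
  have hsad : ∀ n < m', IsSaddleInterval b S (Lp n) (ℓ n) (s n) (cm n) (cp n) := fun n hn =>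
    { isMaxOn_left := fun y hy => hLfix n hn.le ▸ (hz (Lp n)).2.1 y hy
      isMaxOn_right := fun y hy => hzland n hn _ ⟨le_rfl, (hland n hn).le⟩ ▸ (hz (ℓ n)).2.1 y hy
      zeros_eq := hcompSig n hn
      derivWithin_pos := hcpside n hn }
  refine ⟨fun x hx => ?_, fun x hx => ?_⟩
  · obtain ⟨n, hn, j, hj, hxj⟩ : ∃ n < m', ∃ j < s n, x ∈ Icc (cm n j) (cp n j) := by
      simpa only [hF', mem_iUnion₂, Finset.mem_range, exists_prop] using hx
    have hxIoo := ((hsad n hn).mem_zeros hj hxj).1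
    obtain ⟨hfar, hlim⟩ := (hsad n hn).tendsto_of_mem_zeros hb hbper hB hSd hj hxj
    rw [hG₀Sig n hn x hxIoo, hG₁Sig n hn x hxIoo, IsFarthestMax.unique (hz x) hfar,
      sum_ite_mem_Icc_eq (fun k hk => (hcSig n hn k hk).2.1) (hcord2 n hn) hj hxj,
      abs_of_pos (hcpside n hn j hj)]
    simpa only [hπ] using hlim
  · obtain ⟨⟨n, hn, hxIoo⟩, hxF⟩ : (∃ n < m', x ∈ Ioo (Lp n) (ℓ n)) ∧ x ∉ F' := by
      simpa only [hG', Set.mem_sdiff, mem_iUnion₂, Finset.mem_range, exists_prop] using hx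
    have hbx : b x ≠ 0 := fun h0 => hxF <| by
      have : x ∈ ⋃ j ∈ Finset.range (s n), Icc (cm n j) (cp n j) := hcompSig n hn ▸ ⟨hxIoo, h0⟩
      rw [hF']
      exact mem_iUnion₂.2 ⟨n, Finset.mem_range.2 hn, this⟩
    obtain ⟨hfar, hlim⟩ := (hsad n hn).tendsto_of_ne_zero hb hSd hxIoo hbx
    rw [hG₂Sig n hn x hxIoo, if_neg hbx, IsFarthestMax.unique (hz x) hfar, one_div]
    simpa only [hπ, sub_self, zero_div, exp_zero, one_mul] using hlim

/-- (Proposition 5.1(2): sharp estimate on the saddle intervals.)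
Assuming `q ≥ 1`: on `ℱ`, `π_ε(x) = (G₀(x) + √ε G₁(x) + o(√ε)) e^{-V̂(x)/ε}`, and on
`𝒢`, `π_ε(x) = (1+o(1)) ε G₂(x) e^{-V̂(x)/ε}`. -/
theorem sharp_estimate_on_saddle_intervals
    (b : ℝ → ℝ) (hb : Continuous b) (hbper : ∀ x, b (x + 1) = b x)
    (hB : 0 < ∫ θ in (0:ℝ)..1, b θ)
    (S : ℝ → ℝ) (hS : ∀ x, S x = -∫ t in (0:ℝ)..x, b t)
    -- (H1)–(H3)
    (p : ℕ) (li ri : ℕ → ℝ)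
    (hcomp : {θ : ℝ | θ ∈ Set.Ico (0:ℝ) 1 ∧ b θ = 0}
        = ⋃ j ∈ Finset.range p, Set.Icc (li j) (ri j))
    (hcord : ∀ j, j + 1 < p → ri j < li (j + 1))
    (hcin : ∀ j < p, 0 < li j ∧ li j ≤ ri j ∧ ri j < 1)
    (hC2 : ContDiffOn ℝ 2 b {θ : ℝ | b θ ≠ 0})
    (hH3 : ∀ j < p, derivWithin b (Set.Ici (ri j)) (ri j) ≠ 0 ∧
        derivWithin b (Set.Iic (li j)) (li j) ≠ 0)
    -- the farthest maximum to the right and the quasi-potential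
    (z : ℝ → ℝ)
    (hz : ∀ x, x ≤ z x ∧ (∀ y, x ≤ y → S y ≤ S (z x)) ∧
        (∀ y, x ≤ y → S y = S (z x) → y ≤ z x))
    -- landscapes `Λ_n = [ℓ_n, L⁺_{n+1}]` and saddle intervals `Σ_n = (L⁺_n, ℓ_n)`
    (m' : ℕ) (hm' : 1 ≤ m') (ℓ Lp : ℕ → ℝ)
    (hsaddle : ∀ n ≤ m', Lp n < ℓ n)
    (hland : ∀ n < m', ℓ n < Lp (n + 1))
    (hLfix : ∀ n ≤ m', z (Lp n) = Lp n)
    (hheight : ∀ n < m', S (ℓ n) = S (Lp (n + 1)))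
    (hzland : ∀ n < m', ∀ x ∈ Set.Icc (ℓ n) (Lp (n + 1)), S (z x) = S (ℓ n))
    -- components of `{b = 0}` inside the saddle intervals; `ℱ`, `𝒢`, `G₀`, `G₁`, `G₂`
    (s : ℕ → ℕ) (cm cp : ℕ → ℕ → ℝ)
    (hcSig : ∀ n < m', ∀ j < s n, Lp n < cm n j ∧ cm n j ≤ cp n j ∧ cp n j < ℓ n)
    (hcord2 : ∀ n < m', ∀ j, j + 1 < s n → cp n j < cm n (j + 1))
    (hcompSig : ∀ n < m', {θ : ℝ | θ ∈ Set.Ioo (Lp n) (ℓ n) ∧ b θ = 0}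
        = ⋃ j ∈ Finset.range (s n), Set.Icc (cm n j) (cp n j))
    (hcpside : ∀ n < m', ∀ j < s n, 0 < derivWithin b (Set.Ici (cp n j)) (cp n j))
    (G₀ G₁ G₂ : ℝ → ℝ)
    (hG₀Sig : ∀ n < m', ∀ x ∈ Set.Ioo (Lp n) (ℓ n), G₀ x = z x - x)
    (hG₁Sig : ∀ n < m', ∀ x ∈ Set.Ioo (Lp n) (ℓ n), G₁ x
        = ∑ j ∈ Finset.range (s n),
            if cm n j ≤ x ∧ x ≤ cp n j
            then Real.sqrt (Real.pi / (2 * |derivWithin b (Set.Ici (cp n j)) (cp n j)|))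
            else 0)
    (hG₂Sig : ∀ n < m', ∀ x ∈ Set.Ioo (Lp n) (ℓ n), G₂ x = if b x = 0 then 0 else 1 / b x)
    (F' G' : Set ℝ)
    (hF' : F' = ⋃ n ∈ Finset.range m', ⋃ j ∈ Finset.range (s n), Set.Icc (cm n j) (cp n j))
    (hG' : G' = (⋃ n ∈ Finset.range m', Set.Ioo (Lp n) (ℓ n)) \ F')
    -- the (unnormalized) stationary density
    (πe : ℝ → ℝ → ℝ)
    (hπ : ∀ ε x, πe ε x = ∫ y in x..(x + 1), Real.exp ((S y - S x) / ε))
    :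
    (∀ x ∈ F', Filter.Tendsto
        (fun ε : ℝ => (Real.exp ((S x - S (z x)) / ε) * πe ε x
            - G₀ x - Real.sqrt ε * G₁ x) / Real.sqrt ε)
        (nhdsWithin (0:ℝ) (Set.Ioi 0)) (nhds 0)) ∧
    (∀ x ∈ G', Filter.Tendsto
        (fun ε : ℝ => Real.exp ((S x - S (z x)) / ε) * πe ε x / (ε * G₂ x))
        (nhdsWithin (0:ℝ) (Set.Ioi 0)) (nhds 1)) :=
  sharp_estimate_on_saddle_intervals_general b hb hbper hB S hS z hz m' ℓ Lp hland hLfix hzland s cm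
    cp hcSig hcord2 hcompSig hcpside G₀ G₁ G₂ hG₀Sig hG₁Sig hG₂Sig F' G' hF' hG' πe hπ
end

section
/- Fix ε > 0 and A ∈ ℝ, and define a(ε) := (e^{B/ε} − 1)^{−1}·(1/ε)·∫₀¹ g(y) e^{−S(y)/ε} dy and f(x) := A + a(ε)·∫₀ˣ e^{S(y)/ε} dy + (1/ε)·∫₀ˣ e^{S(y)/ε} ( ∫₀ʸ g(z) e^{−S(z)/ε} dz ) dy for x ∈ [0,1]. Then f(1) = f(0), f′(1) = f′(0), and ε·f″(x) + b(x)·f′(x) = g(x) for all x ∈ (0,1); hence f extends to a 1-periodic C¹ (piecewise C²) function on ℝ solving the Poisson equation L_ε f = g on the torus, where (L_ε f)(θ) = b(θ) f′(θ) + ε f″(θ). -/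
/-!
Write `E = e^{S/ε}`, so that `ε E' = -b E`. The derivative of `f` is `φ = E · (a + ε⁻¹ ∫₀ˣ g/E)`,
and `ε φ' + b φ = g` holds on all of `ℝ`. Under `x ↦ x + 1` the weight `E` gains the factor
`e^{-B/ε}`, while `∫₀ˣ g/E` gains the factor `e^{B/ε}` plus the constant `∫₀¹ g/E`; the value of
`a` is exactly the one that makes `φ` `1`-periodic. Integrating by parts turns the centring
condition `∫₀¹ g π_ε = 0` into `f 1 = f 0`. A function with `1`-periodic derivative and
`f 1 = f 0` is `1`-periodic, so `f` is itself the periodic extension.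
-/

open Real Function intervalIntegral

theorem integral_add_period_of_mul_periodic {u : ℝ → ℝ} {T c : ℝ} (hu : Continuous u)
    (hper : ∀ x, u (x + T) = c * u x) (x : ℝ) :
    ∫ t in (0:ℝ)..x + T, u t = (∫ t in (0:ℝ)..T, u t) + c * ∫ t in (0:ℝ)..x, u t := by
  rw [← integral_add_adjacent_intervals (hu.intervalIntegrable 0 T)
    (hu.intervalIntegrable T (x + T)), ← integral_const_mul]
  congr 1
  simpa only [zero_add, hper] using (integral_comp_add_right u T (a := 0) (b := x)).symm

theorem periodic_of_periodic_hasDerivAt {f f' : ℝ → ℝ} {T : ℝ}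
    (hf : ∀ x, HasDerivAt f (f' x) x) (hf' : Periodic f' T) (hT : f T = f 0) :
    Periodic f T := by
  have hd : ∀ x, HasDerivAt (fun y => f (y + T) - f y) 0 x := fun x =>
    (((hf (x + T)).comp_add_const x T).sub (hf x)).congr_deriv (by rw [hf' x, sub_self])
  intro x
  have := is_const_of_deriv_eq_zero (fun y => (hd y).differentiableAt)
    (fun y => (hd y).deriv) x 0
  rw [zero_add, hT, sub_self, sub_eq_zero] at this
  exact this

theorem integral_mul_primitive_add_primitive_mul {u v : ℝ → ℝ} (hu : Continuous u)
    (hv : Continuous v) (a b : ℝ) :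
    ∫ y in a..b, (u y * ∫ t in a..y, v t) + (∫ t in a..y, u t) * v y
      = (∫ t in a..b, u t) * ∫ t in a..b, v t := by
  have hU := fun x => (hu.integral_hasStrictDerivAt a x).hasDerivAt
  have hV := fun x => (hv.integral_hasStrictDerivAt a x).hasDerivAt
  simpa using integral_deriv_mul_eq_sub_of_hasDerivAt
    (fun x _ => (hU x).continuousAt.continuousWithinAt)
    (fun x _ => (hV x).continuousAt.continuousWithinAt)
    (fun x _ => hU x) (fun x _ => hV x) (hu.intervalIntegrable a b) (hv.intervalIntegrable a b)

theorem integral_mul_primitive_of_integral_mul_eq_zero {u v : ℝ → ℝ} {c : ℝ}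
    (hu : Continuous u) (hv : Continuous v) (hc : c ≠ 1)
    (h : ∫ θ in (0:ℝ)..1, v θ * ((∫ t in (0:ℝ)..1, u t) + (c - 1) * ∫ t in (0:ℝ)..θ, u t) = 0) :
    ∫ y in (0:ℝ)..1, u y * ∫ t in (0:ℝ)..y, v t
      = c / (c - 1) * (∫ t in (0:ℝ)..1, u t) * ∫ t in (0:ℝ)..1, v t := by
  have hU : Continuous fun y => ∫ t in (0:ℝ)..y, u t :=
    continuous_primitive (fun _ _ => hu.intervalIntegrable _ _) 0
  have hV : Continuous fun y => ∫ t in (0:ℝ)..y, v t :=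
    continuous_primitive (fun _ _ => hv.intervalIntegrable _ _) 0
  have hparts := integral_mul_primitive_add_primitive_mul hu hv 0 1
  have hsplit : ∀ θ, v θ * ((∫ t in (0:ℝ)..1, u t) + (c - 1) * ∫ t in (0:ℝ)..θ, u t)
      = v θ * (∫ t in (0:ℝ)..1, u t) + (c - 1) * ((∫ t in (0:ℝ)..θ, u t) * v θ) :=
    fun θ => by ring
  simp_rw [hsplit] at h
  rw [integral_add (f := fun y => u y * ∫ t in (0:ℝ)..y, v t)
    (g := fun y => (∫ t in (0:ℝ)..y, u t) * v y) ((hu.mul hV).intervalIntegrable 0 1)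
    ((hU.mul hv).intervalIntegrable 0 1)] at hparts
  rw [integral_add (f := fun θ => v θ * ∫ t in (0:ℝ)..1, u t)
    (g := fun θ => (c - 1) * ((∫ t in (0:ℝ)..θ, u t) * v θ))
    ((hv.mul continuous_const).intervalIntegrable 0 1)
    ((continuous_const.mul (hU.mul hv)).intervalIntegrable 0 1), integral_mul_const,
    integral_const_mul] at h
  have hc' : c - 1 ≠ 0 := sub_ne_zero.2 hc
  field_simp
  linear_combination (c - 1) * hparts - h

section PoissonTorus

variable {b S g : ℝ → ℝ} {B ε A a : ℝ}

theorem hasDerivAt_of_eq_neg_integral (hb : Continuous b)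
    (hS : ∀ x, S x = -∫ t in (0:ℝ)..x, b t) (x : ℝ) : HasDerivAt S (-b x) x := by
  rw [show S = _ from funext hS]
  exact (hb.integral_hasStrictDerivAt 0 x).hasDerivAt.neg

theorem add_one_eq_sub_of_eq_neg_integral (hb : Continuous b) (hbper : ∀ x, b (x + 1) = b x)
    (hB : B = ∫ θ in (0:ℝ)..1, b θ) (hS : ∀ x, S x = -∫ t in (0:ℝ)..x, b t) (x : ℝ) :
    S (x + 1) = S x - B := by
  rw [hS, hS, integral_add_period_of_mul_periodic hb (c := 1) (by simpa using hbper), hB]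
  ring

noncomputable def poissonSolution (S g : ℝ → ℝ) (ε A a x : ℝ) : ℝ :=
  A + a * (∫ y in (0:ℝ)..x, exp (S y / ε))
    + (1 / ε) * ∫ y in (0:ℝ)..x, exp (S y / ε) * ∫ t in (0:ℝ)..y, g t * exp (-S t / ε)

noncomputable def poissonSolutionDeriv (S g : ℝ → ℝ) (ε a x : ℝ) : ℝ :=
  exp (S x / ε) * (a + (1 / ε) * ∫ t in (0:ℝ)..x, g t * exp (-S t / ε))

theorem hasDerivAt_poissonSolution (hSc : Continuous S) (hg : Continuous g) (x : ℝ) :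
    HasDerivAt (poissonSolution S g ε A a) (poissonSolutionDeriv S g ε a x) x := by
  have hE : Continuous fun y => exp (S y / ε) := by fun_prop
  have hG : Continuous fun y => ∫ t in (0:ℝ)..y, g t * exp (-S t / ε) :=
    continuous_primitive (fun _ _ => (by fun_prop : Continuous _).intervalIntegrable _ _) 0
  refine ((((hE.integral_hasStrictDerivAt 0 x).hasDerivAt.const_mul a).const_add A).add
    (((hE.mul hG).integral_hasStrictDerivAt 0 x).hasDerivAt.const_mul (1 / ε))).congr_deriv ?_
  simp only [poissonSolutionDeriv, Pi.mul_apply]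
  ring

theorem hasDerivAt_poissonSolutionDeriv (hε : ε ≠ 0) (hS' : ∀ x, HasDerivAt S (-b x) x)
    (hg : Continuous g) (x : ℝ) :
    HasDerivAt (poissonSolutionDeriv S g ε a)
      ((g x - b x * poissonSolutionDeriv S g ε a x) / ε) x := by
  have hSc : Continuous S := continuous_iff_continuousAt.2 fun x => (hS' x).continuousAt
  have hh : Continuous fun t => g t * exp (-S t / ε) := by fun_prop
  refine (((hS' x).div_const ε).exp.mul
    (((hh.integral_hasStrictDerivAt 0 x).hasDerivAt.const_mul (1 / ε)).const_add a)).congr_deriv ?_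
  simp only [poissonSolutionDeriv, neg_div, exp_neg]
  field_simp
  ring

theorem poissonSolutionDeriv_periodic (hε : ε ≠ 0) (hB0 : B ≠ 0) (hSc : Continuous S)
    (hS1 : ∀ x, S (x + 1) = S x - B) (hg : Continuous g) (hgper : ∀ x, g (x + 1) = g x)
    (ha : a = (exp (B / ε) - 1)⁻¹ * (1 / ε) * ∫ y in (0:ℝ)..1, g y * exp (-S y / ε)) :
    Periodic (poissonSolutionDeriv S g ε a) 1 := by
  have hh : Continuous fun t => g t * exp (-S t / ε) := by fun_prop
  have hhper : ∀ t, g (t + 1) * exp (-S (t + 1) / ε) = exp (B / ε) * (g t * exp (-S t / ε)) :=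
    fun t => by rw [hgper, hS1, mul_left_comm, ← exp_add]; congr 2; ring
  have hq : exp (B / ε) - 1 ≠ 0 := sub_ne_zero.2 (mt (Real.exp_eq_one_iff _).1 (div_ne_zero hB0 hε))
  intro x
  simp only [poissonSolutionDeriv]
  rw [integral_add_period_of_mul_periodic hh hhper, hS1, sub_div, exp_sub, ha]
  field_simp
  ring

theorem integral_exp_sub_div_self_add_one (hSc : Continuous S) (hS1 : ∀ x, S (x + 1) = S x - B)
    (θ : ℝ) :
    ∫ y in θ..θ + 1, exp ((S y - S θ) / ε) = exp (-S θ / ε) *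
      ((∫ y in (0:ℝ)..1, exp (S y / ε)) + (exp (-B / ε) - 1) * ∫ y in (0:ℝ)..θ, exp (S y / ε)) := by
  have hE : Continuous fun y => exp (S y / ε) := by fun_prop
  have hEper : ∀ y, exp (S (y + 1) / ε) = exp (-B / ε) * exp (S y / ε) :=
    fun y => by rw [hS1, ← exp_add]; congr 1; ring
  have hsplit : ∀ y, exp ((S y - S θ) / ε) = exp (S y / ε) * exp (-S θ / ε) :=
    fun y => by rw [← exp_add]; congr 1; ring
  simp_rw [hsplit]
  rw [integral_mul_const, ← integral_interval_sub_left (hE.intervalIntegrable 0 _)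
    (hE.intervalIntegrable 0 θ), integral_add_period_of_mul_periodic hE hEper]
  ring

theorem poissonSolution_one_eq_poissonSolution_zero (hε : ε ≠ 0) (hB0 : B ≠ 0) (hSc : Continuous S)
    (hS1 : ∀ x, S (x + 1) = S x - B) (hg : Continuous g)
    (hmean : (∫ θ in (0:ℝ)..1, g θ * ∫ y in θ..(θ + 1), exp ((S y - S θ) / ε)) = 0)
    (ha : a = (exp (B / ε) - 1)⁻¹ * (1 / ε) * ∫ y in (0:ℝ)..1, g y * exp (-S y / ε)) :
    poissonSolution S g ε A a 1 = poissonSolution S g ε A a 0 := by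
  have hq : exp (B / ε) - 1 ≠ 0 := sub_ne_zero.2 (mt (Real.exp_eq_one_iff _).1 (div_ne_zero hB0 hε))
  have hq' : exp (-B / ε) ≠ 1 := mt (Real.exp_eq_one_iff _).1 (div_ne_zero (neg_ne_zero.2 hB0) hε)
  simp_rw [integral_exp_sub_div_self_add_one hSc hS1, ← mul_assoc] at hmean
  rw [poissonSolution, poissonSolution, integral_same, integral_same,
    integral_mul_primitive_of_integral_mul_eq_zero (by fun_prop) (by fun_prop) hq' hmean, ha,
    neg_div, exp_neg]
  have hq1 : 1 - exp (B / ε) ≠ 0 := by rwa [← neg_ne_zero, neg_sub]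
  field_simp
  ring

end PoissonTorus

/-- Explicit solution of the Poisson equation `L_ε f = g` on the
torus: the function `f` defined below satisfies `f 1 = f 0`, `f' 1 = f' 0`,
`ε f'' + b f' = g` on `(0,1)`, and extends to a `1`-periodic `C¹` function solving
the Poisson equation on all of `ℝ`. -/
theorem poisson_equation_solution
    (b : ℝ → ℝ) (hb : Continuous b) (hbper : ∀ x, b (x + 1) = b x)
    (B : ℝ) (hB : B = ∫ θ in (0:ℝ)..1, b θ) (hBpos : 0 < B)
    (S : ℝ → ℝ) (hS : ∀ x, S x = -∫ t in (0:ℝ)..x, b t)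
    (g : ℝ → ℝ) (hg : Continuous g) (hgper : ∀ x, g (x + 1) = g x)
    (ε : ℝ) (hε : 0 < ε)
    (hmean : (∫ θ in (0:ℝ)..1,
        g θ * ∫ y in θ..(θ + 1), Real.exp ((S y - S θ) / ε)) = 0)
    (A a : ℝ)
    (ha : a = (Real.exp (B / ε) - 1)⁻¹ * (1 / ε) *
        ∫ y in (0:ℝ)..1, g y * Real.exp (-(S y) / ε))
    (f : ℝ → ℝ)
    (hf : ∀ x, f x = A + a * (∫ y in (0:ℝ)..x, Real.exp (S y / ε))
        + (1 / ε) * ∫ y in (0:ℝ)..x,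
            Real.exp (S y / ε) * ∫ t in (0:ℝ)..y, g t * Real.exp (-(S t) / ε)) :
    f 1 = f 0 ∧ deriv f 1 = deriv f 0 ∧
    (∀ x ∈ Set.Ioo (0:ℝ) 1, ε * deriv (deriv f) x + b x * deriv f x = g x) ∧
    ∃ F : ℝ → ℝ, (∀ θ, F (θ + 1) = F θ) ∧ Set.EqOn F f (Set.Icc 0 1) ∧
      ContDiff ℝ 1 F ∧ (∀ θ, b θ * deriv F θ + ε * deriv (deriv F) θ = g θ) := by
  have hS' := hasDerivAt_of_eq_neg_integral hb hS
  have hSc : Continuous S := continuous_iff_continuousAt.2 fun x => (hS' x).continuousAt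
  have hS1 := add_one_eq_sub_of_eq_neg_integral hb hbper hB hS
  have hfeq : f = poissonSolution S g ε A a := funext hf
  set φ := poissonSolutionDeriv S g ε a
  have hf' : ∀ x, HasDerivAt f (φ x) x := hfeq ▸ hasDerivAt_poissonSolution hSc hg
  have hφ' : ∀ x, HasDerivAt φ ((g x - b x * φ x) / ε) x :=
    hasDerivAt_poissonSolutionDeriv hε.ne' hS' hg
  have hφper : Periodic φ 1 :=
    poissonSolutionDeriv_periodic hε.ne' hBpos.ne' hSc hS1 hg hgper ha
  have hf10 : f 1 = f 0 :=
    hfeq ▸ poissonSolution_one_eq_poissonSolution_zero hε.ne' hBpos.ne' hSc hS1 hg hmean ha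
  have hdf : deriv f = φ := funext fun x => (hf' x).deriv
  have hODE : ∀ x, ε * deriv (deriv f) x + b x * deriv f x = g x := fun x => by
    rw [hdf, (hφ' x).deriv]
    field_simp
    ring
  refine ⟨hf10, by simpa [hdf] using hφper 0, fun x _ => hODE x, f,
    periodic_of_periodic_hasDerivAt hf' hφper hf10, fun _ _ => rfl, ?_,
    fun θ => by linarith [hODE θ]⟩
  exact contDiff_one_iff_deriv.2 ⟨fun x => (hf' x).differentiableAt,
    hdf ▸ continuous_iff_continuousAt.2 fun x => (hφ' x).continuousAt⟩
end

section
/- For every ε > 0, Cap_ε(𝒜₁,𝒜₂) = ε·( h′((1+θ₁⁻)−)·m_ε(θ₁⁻) − h′(θ₁⁺+)·m_ε(θ₁⁺) ), where the one-sided derivatives of the equilibrium potential are h′((1+θ₁⁻)−) = e^{S(1+θ₁⁻)/ε} / ∫_{θ₂⁺}^{1+θ₁⁻} e^{S(y)/ε} dy and h′(θ₁⁺+) = − e^{S(θ₁⁺)/ε} / ∫_{θ₁⁺}^{θ₂⁻} e^{S(y)/ε} dy; equivalently, Cap_ε(𝒜₁,𝒜₂) = ε·( e^{S(1+θ₁⁻)/ε}·m_ε(θ₁⁻)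 / ∫_{θ₂⁺}^{1+θ₁⁻} e^{S(y)/ε} dy + e^{S(θ₁⁺)/ε}·m_ε(θ₁⁺) / ∫_{θ₁⁺}^{θ₂⁻} e^{S(y)/ε} dy ). -/
/-!
On each of the arcs `[θ₁⁻, θ₁⁺]`, `[θ₁⁺, θ₂⁻]`, `[θ₂⁻, θ₂⁺]`, `[θ₂⁺, 1 + θ₁⁻]` the potential `h` is
an affine function `α + β G` of a primitive `G` of `g = e^{S/ε}`, so `h'² m_ε = β² g w` with
`w = g m_ε`. Since `g π_ε = ∫_x^{x+1} g` and `g (x + 1) = e^{-B/ε} g x`, the weight satisfies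
`w' = κ g` for a constant `κ`; hence `w` is affine in `G` as well and the trapezoid rule computes
`∫ g w` exactly. On the two transition arcs `β = ∓1/D`, with `D` the integral of `g` over the arc,
and `w` increases by `κ D` across each of them, so the contributions `±κ/2` cancel and only the
values of `w` at `θ₁⁺` and `1 + θ₁⁻` remain.
-/

open MeasureTheory intervalIntegral Set Function Real

noncomputable def stationaryDensity (S : ℝ → ℝ) (ε x : ℝ) : ℝ :=
  ∫ y in x..x + 1, exp ((S y - S x) / ε)

lemma integral_add_one_eq_sub (g : ℝ → ℝ) (hg : Continuous g) (x : ℝ) :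
    ∫ y in x..x + 1, g y = (∫ y in (0:ℝ)..x + 1, g y) - ∫ y in (0:ℝ)..x, g y :=
  (integral_interval_sub_left (hg.intervalIntegrable _ _) (hg.intervalIntegrable _ _)).symm

lemma hasDerivAt_integral_add_one {g : ℝ → ℝ} {q : ℝ} (hg : Continuous g)
    (hgq : ∀ x, g (x + 1) = q * g x) (x : ℝ) :
    HasDerivAt (fun x => ∫ y in x..x + 1, g y) ((q - 1) * g x) x := by
  simp only [integral_add_one_eq_sub g hg]
  have hright := ((hg.integral_hasStrictDerivAt 0 (x + 1)).hasDerivAt).comp_add_const x 1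
  exact (hright.sub (hg.integral_hasStrictDerivAt 0 x).hasDerivAt).congr_deriv (by rw [hgq]; ring)

section stationaryDensity

variable {S : ℝ → ℝ} {ε C : ℝ}

lemma stationaryDensity_eq_div (x : ℝ) :
    stationaryDensity S ε x = (∫ y in x..x + 1, exp (S y / ε)) / exp (S x / ε) := by
  simp only [stationaryDensity, sub_div, exp_sub, intervalIntegral.integral_div]

lemma continuous_stationaryDensity (hS : Continuous S) : Continuous (stationaryDensity S ε) := by
  have hg : Continuous fun y => exp (S y / ε) := by fun_prop
  simp only [funext stationaryDensity_eq_div, integral_add_one_eq_sub _ hg]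
  have hprim := continuous_primitive (μ := volume) (fun _ _ => hg.intervalIntegrable _ _) 0
  exact (((hprim.comp (continuous_add_const 1)).sub hprim).div (by fun_prop)) fun _ => exp_ne_zero _

lemma stationaryDensity_periodic (hS1 : ∀ x, S (x + 1) = S x + C) :
    Periodic (stationaryDensity S ε) 1 := fun x => by
  rw [stationaryDensity, ← integral_comp_add_right]
  simp only [hS1, add_sub_add_right_eq_sub, stationaryDensity]

lemma hasDerivAt_exp_mul_stationaryDensity (hS : Continuous S) (hS1 : ∀ x, S (x + 1) = S x + C)
    (x : ℝ) :
    HasDerivAt (fun x => exp (S x / ε) * stationaryDensity S ε x)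
      ((exp (C / ε) - 1) * exp (S x / ε)) x := by
  simp only [stationaryDensity_eq_div, mul_div_cancel₀ _ (exp_ne_zero _)]
  exact hasDerivAt_integral_add_one (by fun_prop)
    (fun y => by rw [hS1, add_div, exp_add, mul_comm]) x

end stationaryDensity

section energy

variable {g h m : ℝ → ℝ} {κ : ℝ}

lemma hasDerivWithinAt_of_eqOn_add_mul_integral (hg : Continuous g) {s : Set ℝ} {p α β x : ℝ}
    (hh : EqOn h (fun t => α + β * ∫ y in p..t, g y) s) (hx : x ∈ s) :
    HasDerivWithinAt h (β * g x) s x :=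
  (((hg.integral_hasStrictDerivAt p x).hasDerivAt.const_mul β).const_add α).hasDerivWithinAt.congr
    (fun _ ht => hh ht) (hh hx)

lemma hasDerivWithinAt_Ici_of_eqOn_integral_div (hg : Continuous g) {a e : ℝ} (hae : a < e)
    (hh : ∀ t ∈ Icc a e, h t = (∫ y in t..e, g y) / ∫ y in a..e, g y) :
    HasDerivWithinAt h (-(g a / ∫ y in a..e, g y)) (Ici a) a := by
  have hh' : EqOn h (fun t => 0 + -(∫ y in a..e, g y)⁻¹ * ∫ y in e..t, g y) (Icc a e) :=
    fun t ht => by rw [hh t ht, integral_symm]; ring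
  exact ((hasDerivWithinAt_of_eqOn_add_mul_integral hg hh' (left_mem_Icc.2 hae.le)).congr_deriv
    (by ring)).mono_of_mem_nhdsWithin (Icc_mem_nhdsGE hae)

lemma hasDerivWithinAt_Iic_of_eqOn_integral_div (hg : Continuous g) {a e : ℝ} (hae : a < e)
    (hh : ∀ t ∈ Icc a e, h t = (∫ y in a..t, g y) / ∫ y in a..e, g y) :
    HasDerivWithinAt h (g e / ∫ y in a..e, g y) (Iic e) e := by
  have hh' : EqOn h (fun t => 0 + (∫ y in a..e, g y)⁻¹ * ∫ y in a..t, g y) (Icc a e) :=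
    fun t ht => by rw [hh t ht]; ring
  exact ((hasDerivWithinAt_of_eqOn_add_mul_integral hg hh' (right_mem_Icc.2 hae.le)).congr_deriv
    (by ring)).mono_of_mem_nhdsWithin (Icc_mem_nhdsLE hae)

lemma sub_eq_mul_integral_of_hasDerivAt (hg : Continuous g) {w : ℝ → ℝ}
    (hw : ∀ t, HasDerivAt w (κ * g t) t) (a e : ℝ) :
    w e - w a = κ * ∫ t in a..e, g t := by
  rw [← intervalIntegral.integral_const_mul, integral_eq_sub_of_hasDerivAt (fun t _ => hw t)
    ((continuous_const.mul hg).intervalIntegrable _ _)]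

lemma integral_mul_eq_trapezoid_of_hasDerivAt (hg : Continuous g) {w : ℝ → ℝ}
    (hw : ∀ t, HasDerivAt w (κ * g t) t) (a e : ℝ) :
    ∫ t in a..e, g t * w t = (∫ t in a..e, g t) * (w a + w e) / 2 := by
  set G := fun t => ∫ y in a..t, g y
  have hF : ∀ t ∈ uIcc a e,
      HasDerivAt (fun t => G t * w t - κ * G t ^ 2 / 2) (g t * w t) t := fun t _ => by
    have hG := (hg.integral_hasStrictDerivAt a t).hasDerivAt
    exact ((hG.mul (hw t)).sub (((hG.pow 2).const_mul κ).div_const 2)).congr_deriv (by ring)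
  have hw_cont : Continuous w := continuous_iff_continuousAt.2 fun t => (hw t).continuousAt
  rw [integral_eq_sub_of_hasDerivAt hF ((hg.mul hw_cont).intervalIntegrable _ _)]
  simp only [G, integral_same]
  linear_combination (G e / 2) * sub_eq_mul_integral_of_hasDerivAt hg hw a e

lemma integral_deriv_sq_mul_of_eqOn (hg : Continuous g) (hm : Continuous m)
    (hgm : ∀ t, HasDerivAt (fun t => g t * m t) (κ * g t) t) {a e p α β : ℝ} (hae : a ≤ e)
    (hh : EqOn h (fun t => α + β * ∫ y in p..t, g y) (Icc a e)) :
    IntervalIntegrable (fun t => deriv h t ^ 2 * m t) volume a e ∧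
      ∫ t in a..e, deriv h t ^ 2 * m t
        = β ^ 2 * (∫ t in a..e, g t) * (g a * m a + g e * m e) / 2 := by
  have hderiv : EqOn (fun t => β ^ 2 * (g t * (g t * m t))) (fun t => deriv h t ^ 2 * m t)
      (uIoo a e) := fun t ht => by
    rw [uIoo_of_le hae] at ht
    have := (hasDerivWithinAt_of_eqOn_add_mul_integral hg hh (Ioo_subset_Icc_self ht)).hasDerivAt
      (Icc_mem_nhds ht.1 ht.2)
    simp only [this.deriv]
    ring
  refine ⟨((continuous_const.mul (hg.mul (hg.mul hm))).intervalIntegrable _ _).congr_uIoo hderiv,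
    ?_⟩
  rw [← integral_congr_uIoo hderiv, intervalIntegral.integral_const_mul,
    integral_mul_eq_trapezoid_of_hasDerivAt hg hgm]
  ring

lemma integral_deriv_sq_mul_of_piecewise (hg : Continuous g) (hg_pos : ∀ t, 0 < g t)
    (hm : Continuous m) (hgm : ∀ t, HasDerivAt (fun t => g t * m t) (κ * g t) t)
    {a₁ a₂ a₃ a₄ a₅ : ℝ} (h12 : a₁ ≤ a₂) (h23 : a₂ < a₃) (h34 : a₃ ≤ a₄) (h45 : a₄ < a₅)
    (h_one : ∀ t ∈ Icc a₁ a₂, h t = 1)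
    (h_zero : ∀ t ∈ Icc a₃ a₄, h t = 0)
    (h_down : ∀ t ∈ Icc a₂ a₃, h t = (∫ y in t..a₃, g y) / ∫ y in a₂..a₃, g y)
    (h_up : ∀ t ∈ Icc a₄ a₅, h t = (∫ y in a₄..t, g y) / ∫ y in a₄..a₅, g y) :
    ∫ t in a₁..a₅, deriv h t ^ 2 * m t
      = g a₂ * m a₂ / (∫ y in a₂..a₃, g y) + g a₅ * m a₅ / ∫ y in a₄..a₅, g y := by
  set D₁ := ∫ y in a₂..a₃, g y
  set D₂ := ∫ y in a₄..a₅, g y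
  have hD₁ : 0 < D₁ := intervalIntegral_pos_of_pos (hg.intervalIntegrable _ _) hg_pos h23
  have hD₂ : 0 < D₂ := intervalIntegral_pos_of_pos (hg.intervalIntegrable _ _) hg_pos h45
  obtain ⟨i₁, e₁⟩ := integral_deriv_sq_mul_of_eqOn hg hm hgm h12 (h := h) (p := a₁) (α := 1)
    (β := 0) fun t ht => by simp [h_one t ht]
  obtain ⟨i₂, e₂⟩ := integral_deriv_sq_mul_of_eqOn hg hm hgm h23.le (h := h) (p := a₃) (α := 0)
    (β := -D₁⁻¹) fun t ht => by simp only [h_down t ht, integral_symm a₃ t]; ring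
  obtain ⟨i₃, e₃⟩ := integral_deriv_sq_mul_of_eqOn hg hm hgm h34 (h := h) (p := a₃) (α := 0)
    (β := 0) fun t ht => by simp [h_zero t ht]
  obtain ⟨i₄, e₄⟩ := integral_deriv_sq_mul_of_eqOn hg hm hgm h45.le (h := h) (p := a₄) (α := 0)
    (β := D₂⁻¹) fun t ht => by simp only [h_up t ht]; ring
  rw [← integral_add_adjacent_intervals (i₁.trans (i₂.trans i₃)) i₄,
    ← integral_add_adjacent_intervals i₁ (i₂.trans i₃), ← integral_add_adjacent_intervals i₂ i₃,
    e₁, e₂, e₃, e₄]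
  rw [eq_add_of_sub_eq' (sub_eq_mul_integral_of_hasDerivAt hg hgm a₂ a₃),
    eq_add_of_sub_eq' (sub_eq_mul_integral_of_hasDerivAt hg hgm a₄ a₅)]
  field_simp
  ring

end energy

theorem capacity_boundary_formula_general
    (b : ℝ → ℝ) (hb : Continuous b) (hbper : ∀ x, b (x + 1) = b x)
    (S : ℝ → ℝ) (hS : ∀ x, S x = -∫ t in (0:ℝ)..x, b t)
    (ε : ℝ)
    (πe : ℝ → ℝ) (hπ : ∀ x, πe x = ∫ y in x..(x + 1), Real.exp ((S y - S x) / ε))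
    (c : ℝ)
    (m : ℝ → ℝ) (hm : ∀ θ, m θ = πe θ / c)
    (θ1m θ1p θ2m θ2p : ℝ)
    (hord : 0 ≤ θ1m ∧ θ1m ≤ θ1p ∧ θ1p < θ2m ∧ θ2m ≤ θ2p ∧ θ2p < 1)
    (h : ℝ → ℝ)
    (hh1 : ∀ θ ∈ Set.Icc θ1m θ1p, h θ = 1)
    (hh0 : ∀ θ ∈ Set.Icc θ2m θ2p, h θ = 0)
    (hhmid : ∀ θ ∈ Set.Icc θ1p θ2m, h θ
        = (∫ y in θ..θ2m, Real.exp (S y / ε)) / (∫ y in θ1p..θ2m, Real.exp (S y / ε)))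
    (hhout : ∀ θ ∈ Set.Icc θ2p (1 + θ1m), h θ
        = (∫ y in θ2p..θ, Real.exp (S y / ε)) / (∫ y in θ2p..(1 + θ1m), Real.exp (S y / ε)))
    (hhper : ∀ θ, h (θ + 1) = h θ)
    (Cap : ℝ)
    (hCap : Cap = ε * ∫ θ in (0:ℝ)..1, (deriv h θ) ^ 2 * m θ) :
    Cap = ε * (derivWithin h (Set.Iic (1 + θ1m)) (1 + θ1m) * m θ1m
        - derivWithin h (Set.Ici θ1p) θ1p * m θ1p) ∧
    derivWithin h (Set.Iic (1 + θ1m)) (1 + θ1m)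
      = Real.exp (S (1 + θ1m) / ε) / (∫ y in θ2p..(1 + θ1m), Real.exp (S y / ε)) ∧
    derivWithin h (Set.Ici θ1p) θ1p
      = -(Real.exp (S θ1p / ε) / (∫ y in θ1p..θ2m, Real.exp (S y / ε))) ∧
    Cap = ε * (Real.exp (S (1 + θ1m) / ε) * m θ1m
          / (∫ y in θ2p..(1 + θ1m), Real.exp (S y / ε))
        + Real.exp (S θ1p / ε) * m θ1p / (∫ y in θ1p..θ2m, Real.exp (S y / ε))) := by
  obtain ⟨h01, h12, h23, h34, h41⟩ := hord
  have h4 : θ2p < 1 + θ1m := by linarith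
  obtain rfl : πe = stationaryDensity S ε := funext hπ
  have hS_cont : Continuous S := funext hS ▸
    (continuous_primitive (μ := volume) (fun _ _ => hb.intervalIntegrable _ _) 0).neg
  have hS1 : ∀ x, S (x + 1) = S x + -∫ t in (0:ℝ)..1, b t := fun x => by
    rw [hS, hS, (show Periodic b 1 from hbper).intervalIntegral_add_eq_add 0 x
      fun _ _ => hb.intervalIntegrable _ _, zero_add]
    ring
  have hm_per : Periodic m 1 := fun x => by rw [hm, hm, stationaryDensity_periodic hS1]
  have hgm (t : ℝ) : HasDerivAt (fun t => exp (S t / ε) * m t)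
      ((exp (-(∫ t in (0:ℝ)..1, b t) / ε) - 1) / c * exp (S t / ε)) t := by
    simp only [hm, ← mul_div_assoc]
    exact ((hasDerivAt_exp_mul_stationaryDensity hS_cont hS1 t).div_const c).congr_deriv (by ring)
  have henergy_per : Periodic (fun t => deriv h t ^ 2 * m t) 1 := fun x => by
    dsimp only
    rw [← deriv_comp_add_const, funext hhper, hm_per]
  have hm_shift : m (1 + θ1m) = m θ1m := add_comm θ1m 1 ▸ hm_per θ1m
  have hshift := henergy_per.intervalIntegral_add_eq 0 θ1m
  rw [zero_add, add_comm θ1m] at hshift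
  rw [hshift, integral_deriv_sq_mul_of_piecewise (by fun_prop) (fun _ => exp_pos _)
      ((continuous_stationaryDensity hS_cont).div_const c |>.congr fun x => (hm x).symm) hgm
      h12 h23 h34 h4 hh1 hh0 hhmid hhout, hm_shift] at hCap
  have hR := (hasDerivWithinAt_Iic_of_eqOn_integral_div (by fun_prop) h4 hhout).derivWithin
    (uniqueDiffWithinAt_Iic _)
  have hL := (hasDerivWithinAt_Ici_of_eqOn_integral_div (by fun_prop) h23 hhmid).derivWithin
    (uniqueDiffWithinAt_Ici _)
  exact ⟨by rw [hCap, hR, hL]; ring, hR, hL, by rw [hCap]; ring⟩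

/-- The capacity between two disjoint arcs `𝒜₁ = [θ₁⁻, θ₁⁺]` and
`𝒜₂ = [θ₂⁻, θ₂⁺]` equals
`ε (h'((1+θ₁⁻)-) m_ε(θ₁⁻) - h'(θ₁⁺+) m_ε(θ₁⁺))`, with explicit one-sided
derivatives of the equilibrium potential, equivalently the explicit sum of the two
ratios of exponential integrals. -/
theorem capacity_boundary_formula
    (b : ℝ → ℝ) (hb : Continuous b) (hbper : ∀ x, b (x + 1) = b x)
    (hB : 0 < ∫ θ in (0:ℝ)..1, b θ)
    (S : ℝ → ℝ) (hS : ∀ x, S x = -∫ t in (0:ℝ)..x, b t)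
    (ε : ℝ) (hε : 0 < ε)
    (πe : ℝ → ℝ) (hπ : ∀ x, πe x = ∫ y in x..(x + 1), Real.exp ((S y - S x) / ε))
    (c : ℝ) (hc : c = ∫ x in (0:ℝ)..1, πe x)
    (m : ℝ → ℝ) (hm : ∀ θ, m θ = πe θ / c)
    (θ1m θ1p θ2m θ2p : ℝ)
    (hord : 0 ≤ θ1m ∧ θ1m ≤ θ1p ∧ θ1p < θ2m ∧ θ2m ≤ θ2p ∧ θ2p < 1)
    (h : ℝ → ℝ)
    (hh1 : ∀ θ ∈ Set.Icc θ1m θ1p, h θ = 1)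
    (hh0 : ∀ θ ∈ Set.Icc θ2m θ2p, h θ = 0)
    (hhmid : ∀ θ ∈ Set.Icc θ1p θ2m, h θ
        = (∫ y in θ..θ2m, Real.exp (S y / ε)) / (∫ y in θ1p..θ2m, Real.exp (S y / ε)))
    (hhout : ∀ θ ∈ Set.Icc θ2p (1 + θ1m), h θ
        = (∫ y in θ2p..θ, Real.exp (S y / ε)) / (∫ y in θ2p..(1 + θ1m), Real.exp (S y / ε)))
    (hhper : ∀ θ, h (θ + 1) = h θ)
    (Cap : ℝ)
    (hCap : Cap = ε * ∫ θ in (0:ℝ)..1, (deriv h θ) ^ 2 * m θ) :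
    Cap = ε * (derivWithin h (Set.Iic (1 + θ1m)) (1 + θ1m) * m θ1m
        - derivWithin h (Set.Ici θ1p) θ1p * m θ1p) ∧
    derivWithin h (Set.Iic (1 + θ1m)) (1 + θ1m)
      = Real.exp (S (1 + θ1m) / ε) / (∫ y in θ2p..(1 + θ1m), Real.exp (S y / ε)) ∧
    derivWithin h (Set.Ici θ1p) θ1p
      = -(Real.exp (S θ1p / ε) / (∫ y in θ1p..θ2m, Real.exp (S y / ε))) ∧
    Cap = ε * (Real.exp (S (1 + θ1m) / ε) * m θ1m
          / (∫ y in θ2p..(1 + θ1m), Real.exp (S y / ε))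
        + Real.exp (S θ1p / ε) * m θ1p / (∫ y in θ1p..θ2m, Real.exp (S y / ε))) :=
  capacity_boundary_formula_general b hb hbper S hS ε πe hπ c m hm θ1m θ1p θ2m θ2p hord h hh1 hh0
    hhmid hhout hhper Cap hCap
end
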